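/- With L the 3×3 matrix of the previous context and a = u^1(u^2)², the function K₁ = −u^1(u^2)²u^3 − (1/8)(u^2)⁴ + (1/2)(u^1)²(u^2)⁴ satisfies dK₁ = d_L K₀ − K₀ da for K₀ = −a; i.e. ∂_i K₁ = Σ_k L^k_i ∂_k K₀ − K₀ ∂_i a for i = 1,2,3. -/
import Mathlib


/-- Partial derivative `∂_i F` at `u` on `ℝ³`. -/
noncomputable def pd (i : Fin 3) (F : (Fin 3 → ℝ) → ℝ) (u : Fin 3 → ℝ) : ℝ :=
  fderiv ℝ F u (Pi.single i 1)

/-- The Jordan-type matrix `L` with diagonal entries `u^3`, superdiagonal entries `u^2/2`. -/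
noncomputable def Lmat (u : Fin 3 → ℝ) : Matrix (Fin 3) (Fin 3) ℝ :=
  !![u 2, u 1 / 2, 0; 0, u 2, u 1 / 2; 0, 0, u 2]

lemma hp (u : Fin 3 → ℝ) (j : Fin 3) :
    HasFDerivAt (fun u : Fin 3 → ℝ => u j)
      (ContinuousLinearMap.proj j : (Fin 3 → ℝ) →L[ℝ] ℝ) u :=
  hasFDerivAt_apply j u

lemma hpw (u : Fin 3 → ℝ) (j : Fin 3) (n : ℕ) :
    HasFDerivAt (fun u : Fin 3 → ℝ => u j ^ n)
      (((n : ℝ) * u j ^ (n - 1)) • (ContinuousLinearMap.proj j : (Fin 3 → ℝ) →L[ℝ] ℝ)) u :=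
  (hasDerivAt_pow n (u j)).comp_hasFDerivAt u (hp u j)

/-- With `a = u^1(u^2)²` and `K₀ = −a`, the function
`K₁ = −u^1(u^2)²u^3 − (1/8)(u^2)⁴ + (1/2)(u^1)²(u^2)⁴` satisfies
`dK₁ = d_L K₀ − K₀ da`, i.e. `∂_i K₁ = Σ_k L^k_i ∂_k K₀ − K₀ ∂_i a` for `i = 1,2,3`. -/
theorem stmt9 (a K₀ K₁ : (Fin 3 → ℝ) → ℝ)
    (ha : ∀ u, a u = u 0 * (u 1) ^ 2)
    (hK₀ : ∀ u, K₀ u = -(a u))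
    (hK₁ : ∀ u, K₁ u = -(u 0) * (u 1) ^ 2 * u 2 - (1 / 8) * (u 1) ^ 4
        + (1 / 2) * (u 0) ^ 2 * (u 1) ^ 4) :
    ∀ i : Fin 3, ∀ u, pd i K₁ u = (∑ k, Lmat u k i * pd k K₀ u) - K₀ u * pd i a u := by
  have ha' : a = fun u => u 0 * (u 1) ^ 2 := funext ha
  have hK₀' : K₀ = fun u => -(u 0 * (u 1) ^ 2) := by
    funext u; rw [hK₀, ha]
  have hK₁' : K₁ = fun u => -(u 0) * (u 1) ^ 2 * u 2 - (1 / 8) * (u 1) ^ 4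
      + (1 / 2) * (u 0) ^ 2 * (u 1) ^ 4 := funext hK₁
  subst ha' hK₀' hK₁'
  intro i u
  have hA : HasFDerivAt (fun u : Fin 3 → ℝ => u 0 * (u 1) ^ 2) _ u :=
    (hp u 0).mul (hpw u 1 2)
  have hB : HasFDerivAt (fun u : Fin 3 → ℝ => -(u 0 * (u 1) ^ 2)) _ u := hA.neg
  have hC : HasFDerivAt (fun u : Fin 3 → ℝ => -(u 0) * (u 1) ^ 2 * u 2
      - (1 / 8) * (u 1) ^ 4 + (1 / 2) * (u 0) ^ 2 * (u 1) ^ 4) _ u :=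
    ((((hp u 0).neg.mul (hpw u 1 2)).mul (hp u 2)).sub
      ((hpw u 1 4).const_mul (1/8))).add
      (((hpw u 0 2).const_mul (1/2)).mul (hpw u 1 4))
  simp only [pd, hA.fderiv, hB.fderiv, hC.fderiv, Fin.sum_univ_three]
  fin_cases i <;>
    simp [Lmat, ContinuousLinearMap.proj, Pi.single_apply] <;> ring
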